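/- arXiv:1101.0897 — 2 statements merged into one kernel-verified Lean document; each statement's English description precedes it below -/
import Mathlib

section
/- With L_1 and L̃_1 as in Bérenger's splitting and τ ≠ 0: if the eigenvalue 0 of L_1(τ,ξ) is semi-simple (i.e. Ker L_1(τ,ξ) ∩ Range L_1(τ,ξ) = {0}), then the eigenvalue 0 of L̃_1(τ,ξ) is semi-simple, i.e. Ker L̃_1(τ,ξ) ⊕ Range L̃_1(τ,ξ) = ℂ^{dN}. -/
open Matrix

/-!
With `S Φ = ∑ₗ Φₗ` and `(B v)ₗ = ξₗ Aₗ v` one has `L̃₁ = τ + B S` and `L₁ = τ + S B`, so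
`S L̃₁ = L₁ S`. If `Φ ∈ Ker L̃₁ ∩ Range L̃₁`, then `S Φ ∈ Ker L₁ ∩ Range L₁ = 0`, and
`0 = L̃₁ Φ = τ Φ + B S Φ = τ Φ` forces `Φ = 0` as `τ ≠ 0`. In finite dimension a trivial
intersection of kernel and range already gives their direct sum, by rank–nullity.
-/

namespace LinearMap

variable {R E F : Type*} [CommRing R] [AddCommGroup E] [Module R E] [AddCommGroup F] [Module R F]

theorem comp_smul_id_add_comp (τ : R) (B : F →ₗ[R] E) (S : E →ₗ[R] F) :
    S ∘ₗ (τ • id + B ∘ₗ S) = (τ • id + S ∘ₗ B) ∘ₗ S := by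
  ext x
  simp

theorem ker_inf_range_smul_id_add_comp_eq_bot {τ : R} (hτ : IsUnit τ) (B : F →ₗ[R] E)
    (S : E →ₗ[R] F) (h : ker (τ • id + S ∘ₗ B) ⊓ range (τ • id + S ∘ₗ B) = ⊥) :
    ker (τ • id + B ∘ₗ S) ⊓ range (τ • id + B ∘ₗ S) = ⊥ := by
  set T : E →ₗ[R] E := τ • id + B ∘ₗ S with hT
  set U : F →ₗ[R] F := τ • id + S ∘ₗ B
  refine eq_bot_iff.mpr fun x hx => ?_
  obtain ⟨hx_ker, y, rfl⟩ := Submodule.mem_inf.mp hx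
  have hST : ∀ z, S (T z) = U (S z) :=
    LinearMap.congr_fun (comp_smul_id_add_comp τ B S)
  have hSx : S (T y) = 0 := by
    refine (Submodule.mem_bot R).mp (h ▸ Submodule.mem_inf.mpr ⟨?_, S y, (hST y).symm⟩)
    rw [mem_ker, ← hST, mem_ker.mp hx_ker, map_zero]
  have hTx := mem_ker.mp hx_ker
  rw [hT, add_apply, comp_apply, hSx, map_zero, add_zero, smul_apply, id_apply,
    hτ.smul_eq_zero] at hTx
  exact (Submodule.mem_bot R).mpr hTx

theorem ker_sup_range_eq_top_of_ker_inf_range_eq_bot {K V : Type*} [Field K] [AddCommGroup V]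
    [Module K V] [FiniteDimensional K V] {f : V →ₗ[K] V} (h : ker f ⊓ range f = ⊥) :
    ker f ⊔ range f = ⊤ :=
  Submodule.eq_top_of_disjoint _ _ (by rw [add_comm, f.finrank_range_add_finrank_ker])
    (disjoint_iff.mpr h)

end LinearMap

namespace Matrix

variable {ι n R : Type*} [Fintype n] [DecidableEq n] [CommRing R]

theorem mulVecLin_smul_one_add (τ : R) (M : Matrix n n R) :
    (τ • (1 : Matrix n n R) + M).mulVecLin = τ • LinearMap.id + M.mulVecLin := by
  ext x
  simp

def sumBlocks (ι n R : Type*) [Zero R] [One R] [DecidableEq n] : Matrix n (ι × n) R :=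
  of fun i q => if q.2 = i then 1 else 0

def stackSmul (ξ : ι → R) (A : ι → Matrix n n R) : Matrix (ι × n) n R :=
  of fun p j => ξ p.1 * A p.1 p.2 j

theorem sumBlocks_mul_stackSmul [Fintype ι] (ξ : ι → R) (A : ι → Matrix n n R) :
    sumBlocks ι n R * stackSmul ξ A = ∑ l, ξ l • A l := by
  ext i j
  simp [sumBlocks, stackSmul, mul_apply, Fintype.sum_prod_type, sum_apply]

theorem smul_one_add_stackSmul_mul_sumBlocks [DecidableEq ι] (τ : R) (ξ : ι → R)
    (A : ι → Matrix n n R) :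
    τ • 1 + stackSmul ξ A * sumBlocks ι n R =
      of fun p q : ι × n => ξ p.1 * A p.1 p.2 q.2 + if p = q then τ else 0 := by
  ext p q
  simp [sumBlocks, stackSmul, mul_apply, one_apply, add_comm]

end Matrix

theorem berenger_semisimple_general (N d : ℕ)
    (A : Fin d → Matrix (Fin N) (Fin N) ℂ)
    (τ : ℂ) (hτ : τ ≠ 0) (ξ : Fin d → ℂ)
    (L1 : Matrix (Fin N) (Fin N) ℂ)
    (hL1 : L1 = τ • (1 : Matrix (Fin N) (Fin N) ℂ) + ∑ l, ξ l • A l)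
    (hss : LinearMap.ker L1.mulVecLin ⊓ LinearMap.range L1.mulVecLin = ⊥)
    (tL1 : Matrix (Fin d × Fin N) (Fin d × Fin N) ℂ)
    (htL1 : tL1 = Matrix.of fun p q : Fin d × Fin N =>
        ξ p.1 * A p.1 p.2 q.2 + if p = q then τ else 0) :
    LinearMap.ker tL1.mulVecLin ⊓ LinearMap.range tL1.mulVecLin = ⊥ ∧
    LinearMap.ker tL1.mulVecLin ⊔ LinearMap.range tL1.mulVecLin = ⊤ := by
  rw [hL1, ← sumBlocks_mul_stackSmul, mulVecLin_smul_one_add, mulVecLin_mul] at hss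
  have hinf : LinearMap.ker tL1.mulVecLin ⊓ LinearMap.range tL1.mulVecLin = ⊥ := by
    rw [htL1, ← smul_one_add_stackSmul_mul_sumBlocks, mulVecLin_smul_one_add, mulVecLin_mul]
    exact LinearMap.ker_inf_range_smul_id_add_comp_eq_bot hτ.isUnit _ _ hss
  exact ⟨hinf, LinearMap.ker_sup_range_eq_top_of_ker_inf_range_eq_bot hinf⟩

/-- If the eigenvalue `0` of `L₁(τ,ξ)` (with `τ ≠ 0`, `det L₁(τ,ξ) = 0`) is
semi-simple, then the eigenvalue `0` of the Bérenger split symbol `L̃₁(τ,ξ)` is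
semi-simple: `Ker L̃₁ ⊕ Range L̃₁ = ℂ^{dN}`. -/
theorem berenger_semisimple (N d : ℕ)
    (A : Fin d → Matrix (Fin N) (Fin N) ℂ)
    (τ : ℂ) (hτ : τ ≠ 0) (ξ : Fin d → ℂ)
    (L1 : Matrix (Fin N) (Fin N) ℂ)
    (hL1 : L1 = τ • (1 : Matrix (Fin N) (Fin N) ℂ) + ∑ l, ξ l • A l)
    (hchar : L1.det = 0)
    (hss : LinearMap.ker L1.mulVecLin ⊓ LinearMap.range L1.mulVecLin = ⊥)
    (tL1 : Matrix (Fin d × Fin N) (Fin d × Fin N) ℂ)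
    (htL1 : tL1 = Matrix.of fun p q : Fin d × Fin N =>
        ξ p.1 * A p.1 p.2 q.2 + if p = q then τ else 0) :
    LinearMap.ker tL1.mulVecLin ⊓ LinearMap.range tL1.mulVecLin = ⊥ ∧
    LinearMap.ker tL1.mulVecLin ⊔ LinearMap.range tL1.mulVecLin = ⊤ :=
  berenger_semisimple_general N d A τ hτ ξ L1 hL1 hss tL1 htL1
end

section
/- Let Π_L(τ,ξ) be the spectral projector onto Ker L_1(τ,ξ) along Range L_1(τ,ξ) (assuming 0 is a semi-simple eigenvalue and τ ≠ 0). Then the dN×dN matrix M whose (i,j) block equals -(ξ_i/τ) A_i Π_L(τ,ξ) (same for all j) satisfies: M² = M, M L̃_1(τ,ξ) = 0, L̃_1(τ,ξ) M = 0, and rank M = dim Ker L̃_1(τ,ξ). Hence M is the spectral projector onto Ker L̃_1(τ,ξ) along Range L̃_1(τ,ξ). -/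
/-!
Write `L₁ = τ + F G` and `L̃₁ = τ + G F`, where `F Φ = ∑ⱼ Φⱼ` and `G u = (ξₗ Aₗ u)ₗ`;
then `M = -τ⁻¹ G Π_L F`. The identities `Π_L F G = F G Π_L = -τ Π_L` and
`(τ + F G) F = F (τ + G F)` give idempotence and both annihilations. For the rank, `x ∈ Ker L̃₁`
gives `F x ∈ Ker L₁ = Range Π_L`, hence `x = -τ⁻¹ G F x = -τ⁻¹ G Π_L F x = M x`, so
`Range M = Ker L̃₁`.
-/

namespace Matrix

section Annihilator

variable {R n : Type*} [CommRing R] [Fintype n] [DecidableEq n] {τ : R} {P S : Matrix n n R}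

lemma mul_eq_neg_smul_of_mul_smul_one_add_eq_zero (h : P * (τ • 1 + S) = 0) :
    P * S = -τ • P := by
  rw [mul_add, Matrix.mul_smul, mul_one] at h
  rw [eq_neg_of_add_eq_zero_right h, neg_smul]

lemma mul_eq_neg_smul_of_smul_one_add_mul_eq_zero (h : (τ • 1 + S) * P = 0) :
    S * P = -τ • P := by
  rw [add_mul, Matrix.smul_mul, one_mul] at h
  rw [eq_neg_of_add_eq_zero_right h, neg_smul]

end Annihilator

section Rank

variable {K n : Type*} [Field K] [Fintype n] {L Q : Matrix n n K}

lemma range_mulVecLin_le_ker_of_mul_eq_zero (h : L * Q = 0) :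
    LinearMap.range Q.mulVecLin ≤ LinearMap.ker L.mulVecLin := by
  rw [LinearMap.range_le_ker_iff, ← mulVecLin_mul, h, mulVecLin_zero]

lemma rank_eq_finrank_ker_of_mul_eq_zero (hLQ : L * Q = 0)
    (hfix : ∀ x, L *ᵥ x = 0 → Q *ᵥ x = x) :
    Q.rank = Module.finrank K (LinearMap.ker L.mulVecLin) := by
  have hrange : LinearMap.range Q.mulVecLin = LinearMap.ker L.mulVecLin :=
    le_antisymm (range_mulVecLin_le_ker_of_mul_eq_zero hLQ) fun x hx => ⟨x, hfix x hx⟩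
  rw [rank, hrange]

lemma mulVec_eq_self_of_rank_eq_finrank_ker (hQ : IsIdempotentElem Q) (hLQ : L * Q = 0)
    (hrank : Q.rank = Module.finrank K (LinearMap.ker L.mulVecLin))
    {y : n → K} (hy : L *ᵥ y = 0) : Q *ᵥ y = y := by
  have hrange : LinearMap.range Q.mulVecLin = LinearMap.ker L.mulVecLin :=
    Submodule.eq_of_le_of_finrank_le (range_mulVecLin_le_ker_of_mul_eq_zero hLQ) hrank.ge
  obtain ⟨z, rfl⟩ : y ∈ LinearMap.range Q.mulVecLin := hrange ▸ hy
  simp only [mulVecLin_apply, mulVec_mulVec, hQ.eq]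

end Rank

section PushThrough

variable {K m n : Type*} [Field K] [Fintype m] [Fintype n]

/-- Given a spectral projector `P` of `τ + F G` at `0`, the corresponding one of `τ + G F`. -/
def pushThroughProj (τ : K) (G : Matrix m n K) (P : Matrix n n K) (F : Matrix n m K) :
    Matrix m m K :=
  (-τ⁻¹) • (G * P * F)

variable [DecidableEq m] [DecidableEq n] {τ : K} {G : Matrix m n K} {P : Matrix n n K}
  {F : Matrix n m K}

lemma isIdempotentElem_pushThroughProj (hτ : τ ≠ 0) (hP : IsIdempotentElem P)
    (hPL : P * (τ • 1 + F * G) = 0) : IsIdempotentElem (pushThroughProj τ G P F) := by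
  have hsq : G * P * F * (G * P * F) = -τ • (G * P * F) := by
    rw [show G * P * F * (G * P * F) = G * (P * (F * G)) * P * F by simp only [Matrix.mul_assoc],
      mul_eq_neg_smul_of_mul_smul_one_add_eq_zero hPL, Matrix.mul_smul, Matrix.smul_mul,
      Matrix.smul_mul, Matrix.mul_assoc G P P, hP.eq]
  rw [IsIdempotentElem, pushThroughProj, smul_mul_smul_comm, hsq, smul_smul]
  congr 1
  field_simp

lemma pushThroughProj_mul_eq_zero (hPL : P * (τ • 1 + F * G) = 0) :
    pushThroughProj τ G P F * (τ • 1 + G * F) = 0 := by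
  have hGF : G * P * F * (G * F) = -τ • (G * P * F) := by
    rw [show G * P * F * (G * F) = G * (P * (F * G)) * F by simp only [Matrix.mul_assoc],
      mul_eq_neg_smul_of_mul_smul_one_add_eq_zero hPL, Matrix.mul_smul, Matrix.smul_mul,
      Matrix.mul_assoc]
  rw [pushThroughProj, Matrix.smul_mul, mul_add, Matrix.mul_smul, mul_one, hGF,
    neg_smul τ, add_neg_cancel, smul_zero]

lemma mul_pushThroughProj_eq_zero (hLP : (τ • 1 + F * G) * P = 0) :
    (τ • 1 + G * F) * pushThroughProj τ G P F = 0 := by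
  have hGF : G * F * (G * P * F) = -τ • (G * P * F) := by
    rw [show G * F * (G * P * F) = G * (F * G * P) * F by simp only [Matrix.mul_assoc],
      mul_eq_neg_smul_of_smul_one_add_mul_eq_zero hLP, Matrix.mul_smul, Matrix.smul_mul,
      Matrix.mul_assoc]
  rw [pushThroughProj, Matrix.mul_smul, add_mul, Matrix.smul_mul, one_mul, hGF,
    neg_smul τ, add_neg_cancel, smul_zero]

lemma pushThroughProj_mulVec_eq_self (hτ : τ ≠ 0)
    (hfix : ∀ y, (τ • 1 + F * G) *ᵥ y = 0 → P *ᵥ y = y)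
    {x : m → K} (hx : (τ • 1 + G * F) *ᵥ x = 0) : pushThroughProj τ G P F *ᵥ x = x := by
  have hxGF : x = -τ⁻¹ • (G *ᵥ F *ᵥ x) := by
    rw [add_mulVec, smul_mulVec, one_mulVec, ← mulVec_mulVec] at hx
    rw [eq_neg_of_add_eq_zero_right hx, smul_neg, neg_smul, neg_neg, smul_smul,
      inv_mul_cancel₀ hτ, one_smul]
  have hPF : P *ᵥ F *ᵥ x = F *ᵥ x := by
    refine hfix _ ?_
    have hFcomm : (τ • 1 + F * G) * F = F * (τ • 1 + G * F) := by
      rw [Matrix.add_mul, Matrix.mul_add, Matrix.smul_mul, Matrix.mul_smul, Matrix.one_mul,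
        Matrix.mul_one, Matrix.mul_assoc]
    rw [mulVec_mulVec, hFcomm, ← mulVec_mulVec, hx, mulVec_zero]
  rw [pushThroughProj, smul_mulVec, ← mulVec_mulVec, ← mulVec_mulVec, hPF, ← hxGF]

end PushThrough

section Blocks

def blockSumMatrix (ι n R : Type*) [Semiring R] [DecidableEq n] : Matrix n (ι × n) R :=
  of fun i q => (1 : Matrix n n R) i q.2

variable {R ι n : Type*} [Semiring R]

def stackBlocks (B : ι → Matrix n n R) : Matrix (ι × n) n R :=
  of fun p j => B p.1 p.2 j

lemma blockSumMatrix_mul_stackBlocks [Fintype ι] [Fintype n] [DecidableEq n]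
    (B : ι → Matrix n n R) : blockSumMatrix ι n R * stackBlocks B = ∑ l, B l := by
  ext i j
  simp [blockSumMatrix, stackBlocks, mul_apply, Fintype.sum_prod_type, one_apply, sum_apply]

lemma stackBlocks_mul [Fintype n] (B : ι → Matrix n n R) (X : Matrix n n R) :
    stackBlocks B * X = stackBlocks fun l => B l * X := by
  ext p j
  simp [stackBlocks, mul_apply]

lemma stackBlocks_mul_blockSumMatrix [Fintype n] [DecidableEq n] (B : ι → Matrix n n R) :
    stackBlocks B * blockSumMatrix ι n R = of fun p q => B p.1 p.2 q.2 := by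
  ext p q
  simp [stackBlocks, blockSumMatrix, mul_apply, one_apply]

end Blocks

end Matrix

open Matrix

theorem berenger_spectral_projector_general (N d : ℕ)
    (A : Fin d → Matrix (Fin N) (Fin N) ℂ)
    (τ : ℂ) (hτ : τ ≠ 0) (ξ : Fin d → ℂ)
    (L1 : Matrix (Fin N) (Fin N) ℂ)
    (hL1 : L1 = τ • (1 : Matrix (Fin N) (Fin N) ℂ) + ∑ l, ξ l • A l)
    (P : Matrix (Fin N) (Fin N) ℂ)
    (hP1 : P * P = P) (hP2 : P * L1 = 0) (hP3 : L1 * P = 0)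
    (hP4 : P.rank = Module.finrank ℂ (LinearMap.ker L1.mulVecLin))
    (tL1 : Matrix (Fin d × Fin N) (Fin d × Fin N) ℂ)
    (htL1 : tL1 = Matrix.of fun p q : Fin d × Fin N =>
        ξ p.1 * A p.1 p.2 q.2 + if p = q then τ else 0)
    (M : Matrix (Fin d × Fin N) (Fin d × Fin N) ℂ)
    (hM : M = Matrix.of fun p q : Fin d × Fin N =>
        -(ξ p.1 / τ) * (A p.1 * P) p.2 q.2) :
    M * M = M ∧ M * tL1 = 0 ∧ tL1 * M = 0 ∧
    M.rank = Module.finrank ℂ (LinearMap.ker tL1.mulVecLin) := by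
  set F := blockSumMatrix (Fin d) (Fin N) ℂ
  set G := stackBlocks fun l => ξ l • A l
  have hL : L1 = τ • 1 + F * G := by rw [hL1, blockSumMatrix_mul_stackBlocks]
  have htL : tL1 = τ • 1 + G * F := by
    rw [htL1, stackBlocks_mul_blockSumMatrix]
    ext p q
    simp [one_apply, add_comm]
  have hMP : M = pushThroughProj τ G P F := by
    rw [hM, pushThroughProj, stackBlocks_mul, stackBlocks_mul_blockSumMatrix]
    ext p q
    simp [div_eq_inv_mul, mul_assoc]
  subst hL htL hMP
  have hPfix : ∀ y, (τ • 1 + F * G) *ᵥ y = 0 → P *ᵥ y = y := fun _ hy =>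
    mulVec_eq_self_of_rank_eq_finrank_ker hP1 hP3 hP4 hy
  exact ⟨isIdempotentElem_pushThroughProj hτ hP1 hP2, pushThroughProj_mul_eq_zero hP2,
    mul_pushThroughProj_eq_zero hP3, rank_eq_finrank_ker_of_mul_eq_zero
      (mul_pushThroughProj_eq_zero hP3) fun _ hx => pushThroughProj_mulVec_eq_self hτ hPfix hx⟩

/-- The `dN×dN` matrix with constant block columns `-(ξᵢ/τ) Aᵢ Π_L(τ,ξ)` is the
spectral projector onto `Ker L̃₁(τ,ξ)` along `Range L̃₁(τ,ξ)`: it is idempotent,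
annihilates and is annihilated by `L̃₁(τ,ξ)`, and has rank `dim Ker L̃₁(τ,ξ)`. -/
theorem berenger_spectral_projector (N d : ℕ)
    (A : Fin d → Matrix (Fin N) (Fin N) ℂ)
    (τ : ℂ) (hτ : τ ≠ 0) (ξ : Fin d → ℂ)
    (L1 : Matrix (Fin N) (Fin N) ℂ)
    (hL1 : L1 = τ • (1 : Matrix (Fin N) (Fin N) ℂ) + ∑ l, ξ l • A l)
    (hchar : L1.det = 0)
    (P : Matrix (Fin N) (Fin N) ℂ)
    (hP1 : P * P = P) (hP2 : P * L1 = 0) (hP3 : L1 * P = 0)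
    (hP4 : P.rank = Module.finrank ℂ (LinearMap.ker L1.mulVecLin))
    (tL1 : Matrix (Fin d × Fin N) (Fin d × Fin N) ℂ)
    (htL1 : tL1 = Matrix.of fun p q : Fin d × Fin N =>
        ξ p.1 * A p.1 p.2 q.2 + if p = q then τ else 0)
    (M : Matrix (Fin d × Fin N) (Fin d × Fin N) ℂ)
    (hM : M = Matrix.of fun p q : Fin d × Fin N =>
        -(ξ p.1 / τ) * (A p.1 * P) p.2 q.2) :
    M * M = M ∧ M * tL1 = 0 ∧ tL1 * M = 0 ∧
    M.rank = Module.finrank ℂ (LinearMap.ker tL1.mulVecLin) :=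
  berenger_spectral_projector_general N d A τ hτ ξ L1 hL1 P hP1 hP2 hP3 hP4 tL1 htL1 M hM
end
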